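/- arXiv:1808.01783 — 4 statements merged into one kernel-verified Lean document; each statement's English description precedes it below -/
import Mathlib

section
/- For each f ∈ H, every t > 0 and all exponents α, β ≥ 1, the functional E_t^{α,β}(·;f) attains a minimizer on X. If moreover A is injective and α > 1, this minimizer is unique. -/
open Filter Topology Set
open scoped ENNReal RealInnerProductSpace

noncomputable section

/-- The variational energy `E_t^{α,β}(u; f)`. -/
def En {X : Type*} [NormedAddCommGroup X] [NormedSpace ℝ X]
    {H : Type*} [NormedAddCommGroup H] [InnerProductSpace ℝ H]
    (A : X →L[ℝ] H) (J : X → ℝ≥0∞) (f : H) (t α β : ℝ) (u : X) : ℝ≥0∞ :=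
  ENNReal.ofReal ((1 / α) * ‖A u - f‖ ^ α) + ENNReal.ofReal (t / β) * J u ^ β

/-- `u` is a minimizer of `E_t^{α,β}(·; f)`. -/
def IsMinimizer {X : Type*} [NormedAddCommGroup X] [NormedSpace ℝ X]
    {H : Type*} [NormedAddCommGroup H] [InnerProductSpace ℝ H]
    (A : X →L[ℝ] H) (J : X → ℝ≥0∞) (f : H) (t α β : ℝ) (u : X) : Prop :=
  ∀ v, En A J f t α β u ≤ En A J f t α β v

/-- `J` is proper. -/
def IsProperFn {X : Type*} (J : X → ℝ≥0∞) : Prop := ∃ u, J u ≠ ⊤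

/-- `J` is absolutely one-homogeneous. -/
def AbsOneHom {X : Type*} [NormedAddCommGroup X] [NormedSpace ℝ X] (J : X → ℝ≥0∞) : Prop :=
  ∀ (c : ℝ) (u : X), J (c • u) = ENNReal.ofReal |c| * J u

/-- `J` is convex. -/
def EConvexFn {X : Type*} [NormedAddCommGroup X] [NormedSpace ℝ X] (J : X → ℝ≥0∞) : Prop :=
  ∀ (u v : X) (a b : ℝ), 0 ≤ a → 0 ≤ b → a + b = 1 →
    J (a • u + b • v) ≤ ENNReal.ofReal a * J u + ENNReal.ofReal b * J v

/-- The subdifferential of `J` at `u`; dual elements are represented as `X →L[ℝ] ℝ`. -/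
def subdiff {X : Type*} [NormedAddCommGroup X] [NormedSpace ℝ X]
    (J : X → ℝ≥0∞) (u : X) : Set (X →L[ℝ] ℝ) :=
  {p | ∀ v, (J u : EReal) + ((p (v - u) : ℝ) : EReal) ≤ (J v : EReal)}

/-- The adjoint `A* q` as an element of the dual of `X`. -/
def Astar {X : Type*} [NormedAddCommGroup X] [NormedSpace ℝ X]
    {H : Type*} [NormedAddCommGroup H] [InnerProductSpace ℝ H]
    (A : X →L[ℝ] H) (q : H) : X →L[ℝ] ℝ :=
  (innerSL ℝ q).comp A

/-- The set of norms `‖q‖` of source elements `q` for solutions of `Au = f`. -/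
def SourceNorms {X : Type*} [NormedAddCommGroup X] [NormedSpace ℝ X]
    {H : Type*} [NormedAddCommGroup H] [InnerProductSpace ℝ H]
    (A : X →L[ℝ] H) (J : X → ℝ≥0∞) (f : H) : Set ℝ :=
  {r | ∃ (u : X) (q : H), J u ≠ ⊤ ∧ A u = f ∧ Astar A q ∈ subdiff J u ∧ r = ‖q‖}

/-- The weak-star topology on the dual `Y →L[ℝ] ℝ` of `Y`. -/
def weakStar (Y : Type*) [NormedAddCommGroup Y] [NormedSpace ℝ Y] :
    TopologicalSpace (Y →L[ℝ] ℝ) :=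
  TopologicalSpace.induced (fun (u : Y →L[ℝ] ℝ) (y : Y) => u y) inferInstance

/-- `J` is lower semicontinuous with respect to the weak-star topology. -/
def WeakStarLSC {Y : Type*} [NormedAddCommGroup Y] [NormedSpace ℝ Y]
    (J : (Y →L[ℝ] ℝ) → ℝ≥0∞) : Prop :=
  @LowerSemicontinuous _ _ (weakStar Y) _ J

/-- `A` is weak-star-to-weak continuous. -/
def WeakStarToWeakCont {Y : Type*} [NormedAddCommGroup Y] [NormedSpace ℝ Y]
    {H : Type*} [NormedAddCommGroup H] [InnerProductSpace ℝ H]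
    (A : (Y →L[ℝ] ℝ) →L[ℝ] H) : Prop :=
  ∀ h : H, @Continuous _ _ (weakStar Y) _ (fun u => (⟪A u, h⟫ : ℝ))

/-- Assumption 1: `‖A ·‖` is a norm on `N(J)` equivalent to the restriction of `‖·‖`. -/
def ANormEquiv {X : Type*} [NormedAddCommGroup X] [NormedSpace ℝ X]
    {H : Type*} [NormedAddCommGroup H] [InnerProductSpace ℝ H]
    (A : X →L[ℝ] H) (J : X → ℝ≥0∞) : Prop :=
  ∃ c > (0:ℝ), ∃ C > (0:ℝ), ∀ u, J u = 0 → c * ‖u‖ ≤ ‖A u‖ ∧ ‖A u‖ ≤ C * ‖u‖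

/-- `PA` is the `A`-orthogonal projection onto `N(J)`. -/
def IsAProj {X : Type*} [NormedAddCommGroup X] [NormedSpace ℝ X]
    {H : Type*} [NormedAddCommGroup H] [InnerProductSpace ℝ H]
    (A : X →L[ℝ] H) (J : X → ℝ≥0∞) (PA : H → X) : Prop :=
  ∀ g : H, J (PA g) = 0 ∧ (∀ u, J u = 0 → ‖A (PA g) - g‖ ≤ ‖A u - g‖) ∧
    (∀ u, J u = 0 → ‖A u - g‖ ≤ ‖A (PA g) - g‖ → u = PA g)

/-- Assumption 2: generalized Poincaré inequality. -/
def PoincareIneq {X : Type*} [NormedAddCommGroup X] [NormedSpace ℝ X]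
    {H : Type*} [NormedAddCommGroup H] [InnerProductSpace ℝ H]
    (A : X →L[ℝ] H) (J : X → ℝ≥0∞) (PA : H → X) : Prop :=
  ∃ C > (0:ℝ), ∀ u, ENNReal.ofReal ‖u - PA (A u)‖ ≤ ENNReal.ofReal C * J u

/-!
Direct method. The energy is weak* lower semicontinuous: the norm of `H` is weakly lower
semicontinuous and `A` is weak*-to-weak continuous. Its sublevel sets are norm bounded: the
Poincaré inequality controls `u - P^A(Au)` by `J u`, and Assumption 1 controls `P^A(Au)` by
`‖Au‖`. By Banach–Alaoglu these sets are weak* compact, so a minimizer exists.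

If `A` is injective and `α > 1`, the fidelity `u ↦ ‖Au - f‖^α` is strictly convex (a Hilbert
space is strictly convex and `r ↦ r^α` is strictly convex), while `J^β` is convex; the midpoint
of two distinct minimizers would have strictly smaller energy.
-/

open scoped NNReal

theorem LowerSemicontinuous.exists_forall_le_of_sublevel_subset {X β : Type*}
    [TopologicalSpace X] [LinearOrder β] {E : X → β} (hE : LowerSemicontinuous E)
    {K : Set X} (hK : IsCompact K) {x₀ : X} (hsub : {x | E x ≤ E x₀} ⊆ K) :
    ∃ x, ∀ y, E x ≤ E y := by
  obtain ⟨x, -, hmin⟩ := (hE.lowerSemicontinuousOn K).exists_isMinOn ⟨x₀, hsub le_rfl⟩ hK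
  refine ⟨x, fun y => ?_⟩
  by_cases hy : E y ≤ E x₀
  · exact hmin (hsub hy)
  · exact (hmin (hsub le_rfl)).trans (le_of_not_ge hy)

theorem LowerSemicontinuous.ennreal_const_mul_rpow {Z : Type*} [TopologicalSpace Z]
    {g : Z → ℝ≥0∞} (hg : LowerSemicontinuous g) {c : ℝ≥0∞} (hc : c ≠ ⊤) {p : ℝ} (hp : 0 ≤ p) :
    LowerSemicontinuous fun z => c * g z ^ p :=
  ((ENNReal.continuous_const_mul hc).comp ENNReal.continuous_rpow_const).comp_lowerSemicontinuous
    hg fun _ _ h => mul_le_mul_right (ENNReal.rpow_le_rpow h hp) c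

theorem ENNReal.le_div_rpow_inv_of_mul_rpow_le {k y c : ℝ≥0∞} {p : ℝ} (hk0 : k ≠ 0)
    (hk : k ≠ ⊤) (hp : 0 < p) (h : k * y ^ p ≤ c) : y ≤ (c / k) ^ p⁻¹ :=
  (ENNReal.le_rpow_inv_iff hp).2 ((ENNReal.le_div_iff_mul_le (Or.inl hk0) (Or.inl hk)).2
    (by rwa [mul_comm]))

theorem lowerSemicontinuous_norm_of_continuous_inner {Z H : Type*} [TopologicalSpace Z]
    [NormedAddCommGroup H] [InnerProductSpace ℝ H] {g : Z → H}
    (hg : ∀ h, Continuous fun z => ⟪g z, h⟫) : LowerSemicontinuous fun z => ‖g z‖ := by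
  intro z c hc
  rcases lt_or_ge c 0 with hc0 | hc0
  · exact Eventually.of_forall fun y => hc0.trans_le (norm_nonneg _)
  have hpos : 0 < ‖g z‖ := hc0.trans_lt hc
  -- test against `g z` itself
  have hz : c * ‖g z‖ < ⟪g z, g z⟫ := by
    rw [real_inner_self_eq_norm_sq, sq]
    exact mul_lt_mul_of_pos_right hc hpos
  filter_upwards [(hg (g z)).continuousAt.eventually_const_lt hz] with y hy
  exact lt_of_mul_lt_mul_right (hy.trans_le (real_inner_le_norm _ _)) hpos.le

theorem isCompact_closedBall_weakStar {Y : Type*} [NormedAddCommGroup Y] [NormedSpace ℝ Y]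
    (R : ℝ) : @IsCompact (Y →L[ℝ] ℝ) (weakStar Y) (Metric.closedBall 0 R) :=
  WeakDual.isCompact_closedBall 0 R

theorem strictConvexOn_norm_rpow {E : Type*} [NormedAddCommGroup E] [NormedSpace ℝ E]
    [StrictConvexSpace ℝ E] {p : ℝ} (hp : 1 < p) : StrictConvexOn ℝ univ fun x : E => ‖x‖ ^ p := by
  refine ⟨convex_univ, fun x _ y _ hxy a b ha hb hab => ?_⟩
  simp only [smul_eq_mul]
  rcases eq_or_ne ‖x‖ ‖y‖ with hn | hn
  · have hlt : ‖a • x + b • y‖ < ‖x‖ := norm_combo_lt_of_ne le_rfl hn.ge hxy ha hb hab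
    calc ‖a • x + b • y‖ ^ p < ‖x‖ ^ p := Real.rpow_lt_rpow (norm_nonneg _) hlt (by linarith)
      _ = a * ‖x‖ ^ p + b * ‖y‖ ^ p := by rw [← hn, ← add_mul, hab, one_mul]
  · have hle : ‖a • x + b • y‖ ≤ a * ‖x‖ + b * ‖y‖ := (norm_add_le _ _).trans_eq (by
      rw [norm_smul, norm_smul, Real.norm_of_nonneg ha.le, Real.norm_of_nonneg hb.le])
    calc ‖a • x + b • y‖ ^ p ≤ (a * ‖x‖ + b * ‖y‖) ^ p :=
          Real.rpow_le_rpow (norm_nonneg _) hle (by linarith)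
      _ < a * ‖x‖ ^ p + b * ‖y‖ ^ p :=
          (strictConvexOn_rpow hp).2 (norm_nonneg x) (norm_nonneg y) hn ha hb hab

section

variable {X H : Type*} [NormedAddCommGroup X] [NormedSpace ℝ X]
  [NormedAddCommGroup H] [InnerProductSpace ℝ H] {A : X →L[ℝ] H} {J : X → ℝ≥0∞}

theorem AbsOneHom.map_zero (hhom : AbsOneHom J) : J 0 = 0 := by
  simpa using hhom 0 0

theorem EConvexFn.rpow_combo_le (hconv : EConvexFn J) {β : ℝ} (hβ : 1 ≤ β) (u v : X)
    {a b : ℝ} (ha : 0 ≤ a) (hb : 0 ≤ b) (hab : a + b = 1) :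
    J (a • u + b • v) ^ β ≤ ENNReal.ofReal a * J u ^ β + ENNReal.ofReal b * J v ^ β := by
  have hw : ENNReal.ofReal a + ENNReal.ofReal b = 1 := by
    rw [← ENNReal.ofReal_add ha hb, hab, ENNReal.ofReal_one]
  exact (ENNReal.rpow_le_rpow (hconv u v a b ha hb hab) (by linarith)).trans
    (ENNReal.rpow_arith_mean_le_arith_mean2_rpow _ _ _ _ hw hβ)

theorem exists_ofReal_norm_le_of_poincare {PA : H → X} (hA1 : ANormEquiv A J)
    (hPA : IsAProj A J PA) (hA2 : PoincareIneq A J PA) (hJ0 : J 0 = 0) :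
    ∃ K L : ℝ≥0, ∀ u, ENNReal.ofReal ‖u‖ ≤ K * J u + L * ENNReal.ofReal ‖A u‖ := by
  obtain ⟨c, hc, _, _, hA1⟩ := hA1
  obtain ⟨Cp, -, hP⟩ := hA2
  refine ⟨Cp.toNNReal, (2 / c).toNNReal, fun u => ?_⟩
  set p := PA (A u)
  have hAp : ‖A p‖ ≤ 2 * ‖A u‖ := by
    -- `0 ∈ N(J)` competes with `P^A(Au)` in the projection problem for `Au`
    have hcomp : ‖A p - A u‖ ≤ ‖A u‖ := by
      simpa using (hPA (A u)).2.1 0 hJ0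
    linarith [norm_le_insert' (A p) (A u)]
  have hp : ‖p‖ ≤ 2 / c * ‖A u‖ := by
    rw [div_mul_eq_mul_div, le_div_iff₀ hc, mul_comm]
    exact (hA1 p (hPA (A u)).1).1.trans hAp
  calc ENNReal.ofReal ‖u‖ ≤ ENNReal.ofReal (‖u - p‖ + ‖p‖) :=
        ENNReal.ofReal_le_ofReal (norm_le_norm_sub_add u p)
    _ ≤ ENNReal.ofReal ‖u - p‖ + ENNReal.ofReal ‖p‖ := ENNReal.ofReal_add_le
    _ ≤ ENNReal.ofReal Cp * J u + ENNReal.ofReal (2 / c * ‖A u‖) :=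
        add_le_add (hP u) (ENNReal.ofReal_le_ofReal hp)
    _ = _ := by rw [ENNReal.ofReal_mul (by positivity)]; rfl

variable {f : H} {t α β : ℝ}

theorem En_ne_top {u : X} (hJ : J u ≠ ⊤) (hβ : 0 ≤ β) : En A J f t α β u ≠ ⊤ :=
  ENNReal.add_ne_top.2 ⟨ENNReal.ofReal_ne_top,
    ENNReal.mul_ne_top ENNReal.ofReal_ne_top (ENNReal.rpow_ne_top_of_nonneg hβ hJ)⟩

theorem ofReal_norm_sub_le_of_En_le {u : X} {c : ℝ≥0∞} (hα : 0 < α)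
    (h : En A J f t α β u ≤ c) :
    ENNReal.ofReal ‖A u - f‖ ≤ (c / ENNReal.ofReal (1 / α)) ^ α⁻¹ := by
  refine ENNReal.le_div_rpow_inv_of_mul_rpow_le (by simpa using hα) ENNReal.ofReal_ne_top hα ?_
  calc _ = ENNReal.ofReal (1 / α * ‖A u - f‖ ^ α) := by
        rw [ENNReal.ofReal_mul (by positivity),
          ENNReal.ofReal_rpow_of_nonneg (norm_nonneg _) hα.le]
    _ ≤ c := le_self_add.trans h

theorem J_le_of_En_le {u : X} {c : ℝ≥0∞} (ht : 0 < t) (hβ : 0 < β)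
    (h : En A J f t α β u ≤ c) : J u ≤ (c / ENNReal.ofReal (t / β)) ^ β⁻¹ :=
  ENNReal.le_div_rpow_inv_of_mul_rpow_le (by simpa using div_pos ht hβ) ENNReal.ofReal_ne_top hβ
    (le_add_self.trans h)

theorem exists_En_sublevel_subset_closedBall {PA : H → X} (hA1 : ANormEquiv A J)
    (hPA : IsAProj A J PA) (hA2 : PoincareIneq A J PA) (hJ0 : J 0 = 0)
    (ht : 0 < t) (hα : 0 < α) (hβ : 0 < β) {c : ℝ≥0∞} (hc : c ≠ ⊤) :
    ∃ R, {u | En A J f t α β u ≤ c} ⊆ Metric.closedBall 0 R := by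
  obtain ⟨K, L, hKL⟩ := exists_ofReal_norm_le_of_poincare hA1 hPA hA2 hJ0
  set M := K * (c / ENNReal.ofReal (t / β)) ^ β⁻¹ +
    L * ((c / ENNReal.ofReal (1 / α)) ^ α⁻¹ + ENNReal.ofReal ‖f‖) with hM_def
  have hM : M ≠ ⊤ := by
    have hαβ : ENNReal.ofReal (t / β) ≠ 0 ∧ ENNReal.ofReal (1 / α) ≠ 0 := by
      constructor <;> simp only [ne_eq, ENNReal.ofReal_eq_zero, not_le] <;> positivity
    have h1 := ENNReal.rpow_ne_top_of_nonneg (inv_nonneg.2 hβ.le) (ENNReal.div_ne_top hc hαβ.1)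
    have h2 := ENNReal.rpow_ne_top_of_nonneg (inv_nonneg.2 hα.le) (ENNReal.div_ne_top hc hαβ.2)
    finiteness
  refine ⟨M.toReal, fun u hu => ?_⟩
  rw [mem_closedBall_zero_iff, ← ENNReal.ofReal_le_iff_le_toReal hM]
  have hAu : ENNReal.ofReal ‖A u‖ ≤ ENNReal.ofReal ‖A u - f‖ + ENNReal.ofReal ‖f‖ :=
    (ENNReal.ofReal_le_ofReal (norm_le_norm_sub_add _ _)).trans ENNReal.ofReal_add_le
  calc ENNReal.ofReal ‖u‖ ≤ K * J u + L * ENNReal.ofReal ‖A u‖ := hKL u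
    _ ≤ M := by
      rw [hM_def]
      gcongr
      · exact J_le_of_En_le ht hβ hu
      · exact hAu.trans (add_le_add_left (ofReal_norm_sub_le_of_En_le hα hu) _)

theorem strictConvexOn_norm_sub_rpow (hA : Function.Injective A) (hα : 1 < α) :
    StrictConvexOn ℝ univ fun u => ‖A u - f‖ ^ α := by
  refine ⟨convex_univ, fun u _ v _ huv a b ha hb hab => ?_⟩
  have hcombo : A (a • u + b • v) - f = a • (A u - f) + b • (A v - f) := by
    conv_lhs => rw [← one_smul ℝ f, ← hab]
    simp only [map_add, map_smul]
    module
  show ‖A (a • u + b • v) - f‖ ^ α < a * ‖A u - f‖ ^ α + b * ‖A v - f‖ ^ α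
  rw [hcombo]
  exact (strictConvexOn_norm_rpow hα).2 trivial trivial
    (fun h => huv (hA (sub_left_injective h))) ha hb hab

theorem En_combo_lt (hconv : EConvexFn J) (hA : Function.Injective A) (hα : 1 < α)
    (hβ : 1 ≤ β) {u v : X} (huv : u ≠ v) (hu : En A J f t α β u ≠ ⊤)
    (hv : En A J f t α β v ≠ ⊤) {a b : ℝ} (ha : 0 < a) (hb : 0 < b) (hab : a + b = 1) :
    En A J f t α β (a • u + b • v) <
      ENNReal.ofReal a * En A J f t α β u + ENNReal.ofReal b * En A J f t α β v := by
  set F : X → ℝ≥0∞ := fun w => ENNReal.ofReal (1 / α * ‖A w - f‖ ^ α)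
  set G : X → ℝ≥0∞ := fun w => ENNReal.ofReal (t / β) * J w ^ β
  set w := a • u + b • v
  have hF : F w < ENNReal.ofReal a * F u + ENNReal.ofReal b * F v := by
    simp only [F]
    rw [← ENNReal.ofReal_mul ha.le, ← ENNReal.ofReal_mul hb.le,
      ← ENNReal.ofReal_add (by positivity) (by positivity),
      ENNReal.ofReal_lt_ofReal_iff_of_nonneg (by positivity)]
    have hstrict := (strictConvexOn_norm_sub_rpow (f := f) hA hα).2 trivial trivial huv ha hb hab
    calc 1 / α * ‖A w - f‖ ^ α < 1 / α * (a * ‖A u - f‖ ^ α + b * ‖A v - f‖ ^ α) :=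
          mul_lt_mul_of_pos_left hstrict (by positivity)
      _ = _ := by ring
  have hG : G w ≤ ENNReal.ofReal a * G u + ENNReal.ofReal b * G v :=
    (mul_le_mul_right (hconv.rpow_combo_le hβ u v ha.le hb.le hab) _).trans_eq (by ring)
  have hGw : G w ≠ ⊤ := by
    have hGu : G u ≠ ⊤ := ne_top_of_le_ne_top hu le_add_self
    have hGv : G v ≠ ⊤ := ne_top_of_le_ne_top hv le_add_self
    exact ne_top_of_le_ne_top (by finiteness) hG
  calc En A J f t α β w = F w + G w := rfl
    _ < (ENNReal.ofReal a * F u + ENNReal.ofReal b * F v) +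
        (ENNReal.ofReal a * G u + ENNReal.ofReal b * G v) :=
      ENNReal.add_lt_add_of_lt_of_le hGw hF hG
    _ = ENNReal.ofReal a * (F u + G u) + ENNReal.ofReal b * (F v + G v) := by ring

theorem IsMinimizer.eq (hconv : EConvexFn J) (hA : Function.Injective A) (hα : 1 < α)
    (hβ : 1 ≤ β) {u v : X} (hu : IsMinimizer A J f t α β u) (hv : IsMinimizer A J f t α β v)
    (hfin : En A J f t α β u ≠ ⊤) : u = v := by
  by_contra huv
  have hEv : En A J f t α β v = En A J f t α β u := le_antisymm (hv u) (hu v)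
  have hhalf : ENNReal.ofReal (1 / 2) + ENNReal.ofReal (1 / 2) = 1 := by
    rw [← ENNReal.ofReal_add] <;> norm_num
  have hlt := En_combo_lt hconv hA hα hβ huv hfin (hEv ▸ hfin)
    (by norm_num : (0 : ℝ) < 1 / 2) (by norm_num : (0 : ℝ) < 1 / 2) (by norm_num)
  rw [hEv, ← add_mul, hhalf, one_mul] at hlt
  exact (hu _).not_gt hlt

end

theorem weakStarLSC_En {Y H : Type*} [NormedAddCommGroup Y] [NormedSpace ℝ Y]
    [NormedAddCommGroup H] [InnerProductSpace ℝ H] {A : (Y →L[ℝ] ℝ) →L[ℝ] H}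
    {J : (Y →L[ℝ] ℝ) → ℝ≥0∞} (f : H) (t : ℝ) {α β : ℝ} (hA3 : WeakStarToWeakCont A)
    (hlsc : WeakStarLSC J) (hα : 0 ≤ α) (hβ : 0 ≤ β) : WeakStarLSC (En A J f t α β) := by
  let _ := weakStar Y
  have hres : LowerSemicontinuous fun u => ENNReal.ofReal ‖A u - f‖ :=
    ENNReal.continuous_ofReal.comp_lowerSemicontinuous
      (lowerSemicontinuous_norm_of_continuous_inner fun h => by
        simp only [inner_sub_left]
        exact (hA3 h).sub continuous_const)
      ENNReal.ofReal_mono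
  have hEn : En A J f t α β = fun u =>
      ENNReal.ofReal (1 / α) * ENNReal.ofReal ‖A u - f‖ ^ α + ENNReal.ofReal (t / β) * J u ^ β := by
    funext u
    rw [En, ENNReal.ofReal_mul (by positivity),
      ENNReal.ofReal_rpow_of_nonneg (norm_nonneg _) hα]
  rw [WeakStarLSC, hEn]
  exact (hres.ennreal_const_mul_rpow ENNReal.ofReal_ne_top hα).add
    (hlsc.ennreal_const_mul_rpow ENNReal.ofReal_ne_top hβ)

theorem exists_isMinimizer {Y H : Type*} [NormedAddCommGroup Y] [NormedSpace ℝ Y]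
    [NormedAddCommGroup H] [InnerProductSpace ℝ H] {A : (Y →L[ℝ] ℝ) →L[ℝ] H}
    {J : (Y →L[ℝ] ℝ) → ℝ≥0∞} {PA : H → (Y →L[ℝ] ℝ)} (f : H) {t α β : ℝ}
    (hJ0 : J 0 = 0) (hlsc : WeakStarLSC J) (hA1 : ANormEquiv A J) (hPA : IsAProj A J PA)
    (hA2 : PoincareIneq A J PA) (hA3 : WeakStarToWeakCont A)
    (ht : 0 < t) (hα : 0 < α) (hβ : 0 < β) : ∃ u, IsMinimizer A J f t α β u := by
  have hfin : En A J f t α β 0 ≠ ⊤ := En_ne_top (by simp [hJ0]) hβ.le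
  obtain ⟨R, hR⟩ := exists_En_sublevel_subset_closedBall hA1 hPA hA2 hJ0 ht hα hβ hfin
  exact @LowerSemicontinuous.exists_forall_le_of_sublevel_subset _ _ (weakStar Y) _ _
    (weakStarLSC_En f t hA3 hlsc hα.le hβ.le) _ (isCompact_closedBall_weakStar R) 0 hR

theorem existence_and_uniqueness_of_minimizers_general
    {Y : Type*} [NormedAddCommGroup Y] [NormedSpace ℝ Y]
    {H : Type*} [NormedAddCommGroup H] [InnerProductSpace ℝ H]
    (A : (Y →L[ℝ] ℝ) →L[ℝ] H) (J : (Y →L[ℝ] ℝ) → ℝ≥0∞) (f : H) (PA : H → (Y →L[ℝ] ℝ))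
    (hconv : EConvexFn J) (hlsc : WeakStarLSC J) (hhom : AbsOneHom J)
    (hA1 : ANormEquiv A J) (hPA : IsAProj A J PA) (hA2 : PoincareIneq A J PA)
    (hA3 : WeakStarToWeakCont A)
    (t α β : ℝ) (ht : 0 < t) (hα : 1 ≤ α) (hβ : 1 ≤ β) :
    (∃ u, IsMinimizer A J f t α β u) ∧
      (Function.Injective A → 1 < α → ∃! u, IsMinimizer A J f t α β u) := by
  have hJ0 := hhom.map_zero
  have hα0 : 0 < α := by linarith
  have hβ0 : 0 < β := by linarith
  obtain ⟨u, hu⟩ := exists_isMinimizer f hJ0 hlsc hA1 hPA hA2 hA3 ht hα0 hβ0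
  have hfin : En A J f t α β u ≠ ⊤ :=
    ne_top_of_le_ne_top (En_ne_top (by simp [hJ0]) hβ0.le) (hu 0)
  exact ⟨⟨u, hu⟩, fun hA hα1 => ⟨u, hu, fun v hv => (hu.eq hconv hA hα1 hβ hv hfin).symm⟩⟩

/-- Existence of minimizers, Theorem 2.1.
For each `f ∈ H`, every `t > 0` and all exponents `α, β ≥ 1`, the functional
`E_t^{α,β}(·;f)` attains a minimizer on `X` (the dual of the separable space `Y`).
If moreover `A` is injective and `α > 1`, this minimizer is unique. -/
theorem existence_and_uniqueness_of_minimizers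
    {Y : Type*} [NormedAddCommGroup Y] [NormedSpace ℝ Y] [TopologicalSpace.SeparableSpace Y]
    {H : Type*} [NormedAddCommGroup H] [InnerProductSpace ℝ H]
    (A : (Y →L[ℝ] ℝ) →L[ℝ] H) (J : (Y →L[ℝ] ℝ) → ℝ≥0∞) (f : H) (PA : H → (Y →L[ℝ] ℝ))
    (hproper : IsProperFn J) (hconv : EConvexFn J) (hlsc : WeakStarLSC J) (hhom : AbsOneHom J)
    (hdata : ∀ w, A w = f → J w ≠ 0)
    (hA1 : ANormEquiv A J) (hPA : IsAProj A J PA) (hA2 : PoincareIneq A J PA)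
    (hA3 : WeakStarToWeakCont A)
    (t α β : ℝ) (ht : 0 < t) (hα : 1 ≤ α) (hβ : 1 ≤ β) :
    (∃ u, IsMinimizer A J f t α β u) ∧
      (Function.Injective A → 1 < α → ∃! u, IsMinimizer A J f t α β u) :=
  existence_and_uniqueness_of_minimizers_general A J f PA hconv hlsc hhom hA1 hPA hA2 hA3 t α β ht
    hα hβ

end
end

section
/- Suppose the range condition and the source condition hold, let β ≥ 1, and set t_* := J_min^{1−β}/s*. Then every minimizer u_t of E_t^{1,β}(·;f) for 0 < t < t_* satisfies Au_t = f. -/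
/-!
Take a source element `q` for a solution `u†` with `t ‖q‖ J_min^{β-1} < 1`, which exists since
`t < J_min^{1-β} / s_*`. For a minimizer `u` write `r = ‖Au - f‖` and `a = J(u)`. Comparing energies
with `u†` gives `r ≤ (t/β)(J_min^β - a^β)`, and the tangent line of `x ↦ x^β` at `J_min` bounds this
by `t J_min^{β-1} (J_min - a)`. The source condition gives `J_min - a ≤ ⟨q, f - Au⟩ ≤ ‖q‖ r`, so
`r ≤ t ‖q‖ J_min^{β-1} r`, forcing `r = 0`.
-/

open Filter Topology Set
open scoped ENNReal RealInnerProductSpace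

noncomputable section

/-- The tangent line of the convex function `x ↦ x ^ β` at `b`, obtained from Bernoulli's
inequality at `a / b - 1`. -/
lemma Real.rpow_sub_rpow_le_mul_rpow_sub {a b β : ℝ} (hβ : 1 ≤ β) (ha : 0 ≤ a) (hb : 0 < b) :
    b ^ β - a ^ β ≤ β * b ^ (β - 1) * (b - a) := by
  have hbern := one_add_mul_self_le_rpow_one_add (s := a / b - 1)
    (by linarith [div_nonneg ha hb.le]) hβ
  rw [add_sub_cancel, Real.div_rpow ha hb.le, le_div_iff₀ (by positivity)] at hbern
  have hbβ : b ^ β = b ^ (β - 1) * b := by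
    rw [← Real.rpow_add_one hb.ne', sub_add_cancel]
  rw [hbβ] at hbern ⊢
  field_simp at hbern
  nlinarith

lemma Real.eq_zero_of_add_mul_rpow_le {r a b s t β : ℝ} (hβ : 1 ≤ β) (ht : 0 < t) (ha : 0 ≤ a)
    (hb : 0 < b) (hr : 0 ≤ r) (hts : t * s < b ^ (1 - β))
    (henergy : r + t / β * a ^ β ≤ t / β * b ^ β) (hsource : b - a ≤ s * r) : r = 0 := by
  have hcontraction : t * s * b ^ (β - 1) < 1 :=
    calc t * s * b ^ (β - 1) < b ^ (1 - β) * b ^ (β - 1) :=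
          mul_lt_mul_of_pos_right hts (by positivity)
      _ = 1 := by rw [← Real.rpow_add hb, sub_add_sub_cancel', sub_self, Real.rpow_zero]
  have hr_le : r ≤ t * s * b ^ (β - 1) * r :=
    calc r ≤ t / β * (b ^ β - a ^ β) := by linarith
      _ ≤ t / β * (β * b ^ (β - 1) * (b - a)) := by
          gcongr
          exact Real.rpow_sub_rpow_le_mul_rpow_sub hβ ha hb
      _ = t * b ^ (β - 1) * (b - a) := by field_simp
      _ ≤ t * b ^ (β - 1) * (s * r) := by gcongr
      _ = t * s * b ^ (β - 1) * r := by ring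
  nlinarith

lemma Real.exists_mul_lt_of_lt_div_csInf {S : Set ℝ} {c t : ℝ} (hS : S.Nonempty)
    (hS_nonneg : ∀ r ∈ S, 0 ≤ r) (ht : 0 < t) (htc : t < c / sInf S) :
    ∃ r ∈ S, t * r < c := by
  have hpos : 0 < sInf S := by
    rcases (le_csInf hS hS_nonneg).lt_or_eq with h | h
    · exact h
    · rw [← h, div_zero] at htc
      linarith
  obtain ⟨r, hr, hlt⟩ :=
    exists_lt_of_csInf_lt hS ((lt_div_iff₀' ht).mpr ((lt_div_iff₀ hpos).mp htc))
  exact ⟨r, hr, (lt_div_iff₀' ht).mp hlt⟩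

section Energy

variable {X : Type*} [NormedAddCommGroup X] [NormedSpace ℝ X]
  {H : Type*} [NormedAddCommGroup H] [InnerProductSpace ℝ H]
  {A : X →L[ℝ] H} {J : X → ℝ≥0∞} {f : H} {t α β : ℝ} {u v : X}

lemma Astar_apply (A : X →L[ℝ] H) (q : H) (u : X) : Astar A q u = ⟪q, A u⟫ := rfl

lemma toReal_add_le_of_mem_subdiff {p : X →L[ℝ] ℝ} (hp : p ∈ subdiff J u) (hu : J u ≠ ⊤)
    (hv : J v ≠ ⊤) : (J u).toReal + p (v - u) ≤ (J v).toReal := by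
  have h := hp v
  rwa [← ENNReal.ofReal_toReal hu, ← ENNReal.ofReal_toReal hv, EReal.coe_ennreal_ofReal,
    EReal.coe_ennreal_ofReal, max_eq_left ENNReal.toReal_nonneg,
    max_eq_left ENNReal.toReal_nonneg, ← EReal.coe_add, EReal.coe_le_coe_iff] at h

lemma toReal_sub_le_of_source {w : X} {q : H} (hq : Astar A q ∈ subdiff J w) (hw : A w = f)
    (hwJ : J w ≠ ⊤) (hu : J u ≠ ⊤) : (J w).toReal - (J u).toReal ≤ ‖q‖ * ‖A u - f‖ := by
  have h := toReal_add_le_of_mem_subdiff hq hwJ hu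
  rw [Astar_apply, map_sub, hw, ← neg_sub f, inner_neg_right] at h
  have := real_inner_le_norm q (f - A u)
  rw [norm_sub_rev] at this
  linarith

lemma En_eq_ofReal (hα : 0 ≤ α) (ht : 0 ≤ t) (hβ : 0 ≤ β) (hu : J u ≠ ⊤) :
    En A J f t α β u = ENNReal.ofReal (1 / α * ‖A u - f‖ ^ α + t / β * (J u).toReal ^ β) := by
  rw [En, ENNReal.ofReal_add (by positivity) (by positivity),
    ENNReal.ofReal_mul (p := t / β) (by positivity),
    ← ENNReal.ofReal_rpow_of_nonneg ENNReal.toReal_nonneg hβ, ENNReal.ofReal_toReal hu]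

lemma IsMinimizer.J_ne_top (hmin : IsMinimizer A J f t α β u) (ht : 0 < t) (hβ : 0 < β)
    (hv : J v ≠ ⊤) : J u ≠ ⊤ := by
  intro hu
  have hv_top : En A J f t α β v ≠ ⊤ := by
    unfold En
    finiteness
  refine hv_top (top_le_iff.mp ?_)
  calc ⊤ = ENNReal.ofReal (t / β) * J u ^ β := by
        rw [hu, ENNReal.top_rpow_of_pos hβ, ENNReal.mul_top (by positivity)]
    _ ≤ En A J f t α β u := le_add_self
    _ ≤ En A J f t α β v := hmin v

lemma IsMinimizer.energy_le (hmin : IsMinimizer A J f t α β u) (hα : 0 ≤ α) (ht : 0 < t)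
    (hβ : 0 < β) (hv : J v ≠ ⊤) :
    1 / α * ‖A u - f‖ ^ α + t / β * (J u).toReal ^ β
      ≤ 1 / α * ‖A v - f‖ ^ α + t / β * (J v).toReal ^ β := by
  have h := hmin v
  rwa [En_eq_ofReal hα ht.le hβ.le hv, En_eq_ofReal hα ht.le hβ.le (hmin.J_ne_top ht hβ hv),
    ENNReal.ofReal_le_ofReal_iff (by positivity)] at h

end Energy

theorem minimizers_solve_before_tstar_general
    {Y : Type*} [NormedAddCommGroup Y] [NormedSpace ℝ Y]
    {H : Type*} [NormedAddCommGroup H] [InnerProductSpace ℝ H]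
    (A : (Y →L[ℝ] ℝ) →L[ℝ] H) (J : (Y →L[ℝ] ℝ) → ℝ≥0∞) (f : H)
    (hRCSC : (SourceNorms A J f).Nonempty)
    (β : ℝ) (hβ : 1 ≤ β)
    (Jmin : ℝ) (hJminpos : 0 < Jmin)
    (hJmin : ∀ (u : Y →L[ℝ] ℝ) (q : H), J u ≠ ⊤ → A u = f → Astar A q ∈ subdiff J u →
      J u = ENNReal.ofReal Jmin) :
    ∀ t : ℝ, 0 < t → t < Jmin ^ ((1:ℝ) - β) / sInf (SourceNorms A J f) →
      ∀ u, IsMinimizer A J f t 1 β u → A u = f := by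
  intro t ht htlt u hmin
  have hβpos : 0 < β := zero_lt_one.trans_le hβ
  obtain ⟨_, ⟨w, q, hwJ, hw, hq, rfl⟩, htq⟩ := Real.exists_mul_lt_of_lt_div_csInf hRCSC
    (by rintro _ ⟨-, q, -, -, -, rfl⟩; exact norm_nonneg q) ht htlt
  have hJw : (J w).toReal = Jmin := by
    rw [hJmin w q hwJ hw hq, ENNReal.toReal_ofReal hJminpos.le]
  have huJ : J u ≠ ⊤ := hmin.J_ne_top ht hβpos hwJ
  have henergy := hmin.energy_le zero_le_one ht hβpos hwJ
  rw [hw, sub_self, norm_zero, hJw, Real.zero_rpow one_ne_zero, mul_zero, zero_add, Real.rpow_one,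
    div_one, one_mul] at henergy
  have hsource := toReal_sub_le_of_source hq hw hwJ huJ
  rw [hJw] at hsource
  have hres := Real.eq_zero_of_add_mul_rpow_le hβ ht ENNReal.toReal_nonneg hJminpos
    (norm_nonneg _) htq henergy hsource
  exact sub_eq_zero.mp (norm_eq_zero.mp hres)

/-- Theorem 2.10.
Suppose the range and source conditions hold, let `β ≥ 1`, and set
`t_* := J_min^{1−β}/s_*`. Then every minimizer `u_t` of `E_t^{1,β}(·;f)` for
`0 < t < t_*` satisfies `Au_t = f`. -/
theorem minimizers_solve_before_tstar
    {Y : Type*} [NormedAddCommGroup Y] [NormedSpace ℝ Y]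
    {H : Type*} [NormedAddCommGroup H] [InnerProductSpace ℝ H]
    (A : (Y →L[ℝ] ℝ) →L[ℝ] H) (J : (Y →L[ℝ] ℝ) → ℝ≥0∞) (f : H)
    (hproper : IsProperFn J) (hconv : EConvexFn J) (hlsc : WeakStarLSC J) (hhom : AbsOneHom J)
    (hdata : ∀ w, A w = f → J w ≠ 0)
    (hRCSC : (SourceNorms A J f).Nonempty)
    (β : ℝ) (hβ : 1 ≤ β)
    (Jmin : ℝ) (hJminpos : 0 < Jmin)
    (hJmin : ∀ (u : Y →L[ℝ] ℝ) (q : H), J u ≠ ⊤ → A u = f → Astar A q ∈ subdiff J u →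
      J u = ENNReal.ofReal Jmin) :
    ∀ t : ℝ, 0 < t → t < Jmin ^ ((1:ℝ) - β) / sInf (SourceNorms A J f) →
      ∀ u, IsMinimizer A J f t 1 β u → A u = f :=
  minimizers_solve_before_tstar_general A J f hRCSC β hβ Jmin hJminpos hJmin

end
end

section
/- Let (t_k) ⊂ (0,∞) be a sequence tending to infinity and for each k let u_{t_k} be a minimizer of E_{t_k}^{α,β}(·;f). Then (u_{t_k}) converges in the weak* topology of X to u_∞ := P^A(f) as k → ∞. -/
open Filter Topology Set
open scoped ENNReal RealInnerProductSpace

noncomputable section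

/-! Comparing a minimizer with `P^A f`, on which `J` vanishes, bounds its fidelity by that of
`P^A f` and gives `J(u_{t_k})^β ≤ C / t_k → 0`. With the Poincaré inequality and Assumption 1
the `u_{t_k}` are then eventually norm-bounded, so by Banach–Alaoglu they stay in a weak*
compact ball. Any weak* cluster point `w` has `J w = 0` by lower semicontinuity and
`‖A w - f‖ ≤ ‖A (P^A f) - f‖` because fidelity sublevel sets are weak* closed, hence
`w = P^A f` by uniqueness of the projection; a sequence in a compact set with a single cluster
point converges to it. -/

open WeakDual StrongDual

theorem AbsOneHom.apply_zero {X : Type*} [NormedAddCommGroup X] [NormedSpace ℝ X]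
    {J : X → ℝ≥0∞} (hJ : AbsOneHom J) : J 0 = 0 := by
  simpa using hJ 0 0

theorem ENNReal.tendsto_zero_of_mul_rpow_le {ι : Type*} {l : Filter ι} {s x : ι → ℝ≥0∞}
    {C : ℝ≥0∞} {β : ℝ} (hs : Tendsto s l (𝓝 ⊤)) (hC : C ≠ ⊤) (hβ : 0 < β)
    (h : ∀ i, s i * x i ^ β ≤ C) : Tendsto x l (𝓝 0) := by
  have hpow : Tendsto (fun i => x i ^ β) l (𝓝 0) := by
    have hCs : Tendsto (fun i => C * (s i)⁻¹) l (𝓝 0) := by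
      simpa using ENNReal.Tendsto.const_mul (tendsto_inv_iff.2 hs) (Or.inr hC)
    refine tendsto_of_tendsto_of_tendsto_of_le_of_le' tendsto_const_nhds hCs
      (Eventually.of_forall fun _ => zero_le) ?_
    filter_upwards [hs.eventually_ne ENNReal.top_ne_zero] with i hi
    rw [← div_eq_mul_inv, ENNReal.le_div_iff_mul_le (Or.inl hi) (Or.inr hC), mul_comm]
    exact h i
  have hroot := ((ENNReal.continuous_rpow_const (y := β⁻¹)).tendsto 0).comp hpow
  simpa [Function.comp_def, ENNReal.rpow_rpow_inv hβ.ne', ENNReal.zero_rpow_of_pos (inv_pos.2 hβ)]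
    using hroot

theorem LowerSemicontinuous.le_of_mapClusterPt {Z γ ι : Type*} [TopologicalSpace Z]
    [LinearOrder γ] [TopologicalSpace γ] [OrderTopology γ] [DenselyOrdered γ] {F : Z → γ}
    (hF : LowerSemicontinuous F) {l : Filter ι} {u : ι → Z} {a : γ} {z : Z}
    (hu : Tendsto (F ∘ u) l (𝓝 a)) (hz : MapClusterPt z l u) : F z ≤ a :=
  le_of_forall_gt_imp_ge_of_dense fun _ hb =>
    (hF.isClosed_preimage _).mem_of_mapClusterPt hz (hu.eventually (eventually_le_nhds hb))

section InnerProductSpace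

variable {H : Type*} [NormedAddCommGroup H] [InnerProductSpace ℝ H]

theorem norm_le_of_forall_inner_le {x : H} {M : ℝ} (hM : 0 ≤ M)
    (h : ∀ y, ⟪x, y⟫ ≤ M * ‖y‖) : ‖x‖ ≤ M := by
  rcases (norm_nonneg x).eq_or_lt with hx | hx
  · exact hx ▸ hM
  · have hxx := h x
    rw [real_inner_self_eq_norm_mul_norm] at hxx
    exact le_of_mul_le_mul_right hxx hx

theorem isClosed_setOf_norm_le_of_continuous_inner {Z : Type*} [TopologicalSpace Z] {g : Z → H}
    (hg : ∀ y, Continuous fun z => ⟪g z, y⟫) {M : ℝ} (hM : 0 ≤ M) :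
    IsClosed {z | ‖g z‖ ≤ M} := by
  have hset : {z | ‖g z‖ ≤ M} = ⋂ y, {z | ⟪g z, y⟫ ≤ M * ‖y‖} := by
    ext z
    simp only [mem_ofPred_eq, mem_iInter]
    exact ⟨fun hz y => (real_inner_le_norm _ _).trans (by gcongr),
      norm_le_of_forall_inner_le hM⟩
  rw [hset]
  exact isClosed_iInter fun y => isClosed_le (hg y) continuous_const

end InnerProductSpace

section Minimizer

variable {X H : Type*} [NormedAddCommGroup X] [NormedSpace ℝ X]
  [NormedAddCommGroup H] [InnerProductSpace ℝ H]
  {A : X →L[ℝ] H} {J : X → ℝ≥0∞} {f : H} {t α β : ℝ} {u v : X}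

theorem En_of_apply_eq_zero (hβ : 0 < β) (hv : J v = 0) :
    En A J f t α β v = ENNReal.ofReal ((1 / α) * ‖A v - f‖ ^ α) := by
  rw [En, hv, ENNReal.zero_rpow_of_pos hβ, mul_zero, add_zero]

theorem IsMinimizer.norm_sub_le (hu : IsMinimizer A J f t α β u) (hα : 0 < α) (hβ : 0 < β)
    (hv : J v = 0) : ‖A u - f‖ ≤ ‖A v - f‖ := by
  have h := le_self_add.trans ((hu v).trans (En_of_apply_eq_zero hβ hv).le)
  rw [ENNReal.ofReal_le_ofReal_iff (by positivity), mul_le_mul_iff_right₀ (by positivity)] at h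
  exact (Real.rpow_le_rpow_iff (norm_nonneg _) (norm_nonneg _) hα).1 h

theorem IsMinimizer.mul_rpow_le (hu : IsMinimizer A J f t α β u) (hβ : 0 < β) (hv : J v = 0) :
    ENNReal.ofReal (t / β) * J u ^ β ≤ ENNReal.ofReal ((1 / α) * ‖A v - f‖ ^ α) :=
  le_add_self.trans ((hu v).trans (En_of_apply_eq_zero hβ hv).le)

theorem tendsto_J_zero_of_isMinimizer {ι : Type*} {l : Filter ι} {t : ι → ℝ} {u : ι → X}
    (ht : Tendsto t l atTop) (hβ : 0 < β) (hu : ∀ i, IsMinimizer A J f (t i) α β (u i))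
    (hv : J v = 0) : Tendsto (fun i => J (u i)) l (𝓝 0) :=
  ENNReal.tendsto_zero_of_mul_rpow_le (ENNReal.tendsto_ofReal_atTop.comp (ht.atTop_div_const hβ))
    ENNReal.ofReal_ne_top hβ fun i => (hu i).mul_rpow_le hβ hv

end Minimizer

section Projection

variable {X H : Type*} [NormedAddCommGroup X] [NormedSpace ℝ X]
  [NormedAddCommGroup H] [InnerProductSpace ℝ H]
  {A : X →L[ℝ] H} {J : X → ℝ≥0∞} {PA : H → X}

theorem IsAProj.norm_map_le (hPA : IsAProj A J PA) (hJ0 : J 0 = 0) (g : H) :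
    ‖A (PA g)‖ ≤ 2 * ‖g‖ := by
  have h := (hPA g).2.1 0 hJ0
  rw [map_zero, zero_sub, norm_neg] at h
  linarith [norm_sub_norm_le (A (PA g)) g]

theorem PoincareIneq.exists_norm_le (hA2 : PoincareIneq A J PA) (hA1 : ANormEquiv A J)
    (hPA : IsAProj A J PA) (hJ0 : J 0 = 0) :
    ∃ a b : ℝ, 0 ≤ b ∧ ∀ u, J u ≤ 1 → ‖u‖ ≤ a + b * ‖A u‖ := by
  obtain ⟨C, hC, hP⟩ := hA2
  obtain ⟨c, hc, _, _, hcA⟩ := hA1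
  refine ⟨C, 2 / c, by positivity, fun u hu => ?_⟩
  have h1 : ‖u - PA (A u)‖ ≤ C :=
    (ENNReal.ofReal_le_ofReal_iff hC.le).1 ((hP u).trans (mul_le_of_le_one_right' hu))
  have h2 : ‖PA (A u)‖ ≤ 2 / c * ‖A u‖ := by
    rw [div_mul_eq_mul_div, le_div_iff₀ hc, mul_comm]
    exact (hcA _ (hPA _).1).1.trans (hPA.norm_map_le hJ0 _)
  calc ‖u‖ ≤ ‖u - PA (A u)‖ + ‖PA (A u)‖ := norm_le_norm_sub_add u (PA (A u))
    _ ≤ C + 2 / c * ‖A u‖ := add_le_add h1 h2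

theorem exists_eventually_norm_le {ι : Type*} (hA1 : ANormEquiv A J) (hPA : IsAProj A J PA)
    (hA2 : PoincareIneq A J PA) (hJ0 : J 0 = 0) {l : Filter ι} {u : ι → X} {f : H} {M : ℝ}
    (hJ : Tendsto (fun i => J (u i)) l (𝓝 0)) (hfid : ∀ i, ‖A (u i) - f‖ ≤ M) :
    ∃ R, ∀ᶠ i in l, ‖u i‖ ≤ R := by
  obtain ⟨a, b, hb, hab⟩ := hA2.exists_norm_le hA1 hPA hJ0
  refine ⟨a + b * (M + ‖f‖), ?_⟩
  filter_upwards [hJ.eventually_le_const zero_lt_one] with i hi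
  have hAu : ‖A (u i)‖ ≤ M + ‖f‖ := by
    linarith [norm_le_norm_sub_add (A (u i)) f, hfid i]
  exact (hab _ hi).trans (by gcongr)

end Projection

theorem mapClusterPt_toWeakDual_eq {Y H ι : Type*} [NormedAddCommGroup Y] [NormedSpace ℝ Y]
    [NormedAddCommGroup H] [InnerProductSpace ℝ H] {A : (Y →L[ℝ] ℝ) →L[ℝ] H}
    {J : (Y →L[ℝ] ℝ) → ℝ≥0∞} {PA : H → (Y →L[ℝ] ℝ)} {f : H} (hlsc : WeakStarLSC J)
    (hA3 : WeakStarToWeakCont A) (hPA : IsAProj A J PA) {l : Filter ι} {u : ι → (Y →L[ℝ] ℝ)}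
    (hJ : Tendsto (fun i => J (u i)) l (𝓝 0)) (hfid : ∀ i, ‖A (u i) - f‖ ≤ ‖A (PA f) - f‖)
    {w : WeakDual ℝ Y} (hw : MapClusterPt w l fun i => toWeakDual (u i)) :
    toStrongDual w = PA f := by
  -- `weakStar Y` is by definition the topology of `WeakDual ℝ Y`.
  have hlsc' : LowerSemicontinuous fun w : WeakDual ℝ Y => J (toStrongDual w) := hlsc
  have hJw : J (toStrongDual w) = 0 := nonpos_iff_eq_zero.1 (hlsc'.le_of_mapClusterPt hJ hw)
  have hA3' : ∀ h, Continuous fun w : WeakDual ℝ Y => ⟪A (toStrongDual w), h⟫ := hA3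
  have hclosed : IsClosed {w : WeakDual ℝ Y | ‖A (toStrongDual w) - f‖ ≤ ‖A (PA f) - f‖} :=
    isClosed_setOf_norm_le_of_continuous_inner
      (fun h => by simp only [inner_sub_left]; exact (hA3' h).sub continuous_const) (norm_nonneg _)
  exact (hPA f).2.2 _ hJw (hclosed.mem_of_mapClusterPt hw (Eventually.of_forall hfid))

theorem convergence_to_projection_general
    {Y : Type*} [NormedAddCommGroup Y] [NormedSpace ℝ Y]
    {H : Type*} [NormedAddCommGroup H] [InnerProductSpace ℝ H]
    (A : (Y →L[ℝ] ℝ) →L[ℝ] H) (J : (Y →L[ℝ] ℝ) → ℝ≥0∞) (f : H) (PA : H → (Y →L[ℝ] ℝ))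
    (hlsc : WeakStarLSC J) (hhom : AbsOneHom J)
    (hA1 : ANormEquiv A J) (hPA : IsAProj A J PA) (hA2 : PoincareIneq A J PA)
    (hA3 : WeakStarToWeakCont A)
    (α β : ℝ) (hα : 1 ≤ α) (hβ : 1 ≤ β)
    (t : ℕ → ℝ) (htinf : Tendsto t atTop atTop)
    (u : ℕ → (Y →L[ℝ] ℝ)) (hu : ∀ k, IsMinimizer A J f (t k) α β (u k)) :
    ∀ y : Y, Tendsto (fun k => u k y) atTop (𝓝 (PA f y)) := by
  have hα0 : 0 < α := by linarith
  have hβ0 : 0 < β := by linarith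
  have hJ := tendsto_J_zero_of_isMinimizer htinf hβ0 hu (hPA f).1
  have hfid k := (hu k).norm_sub_le hα0 hβ0 (hPA f).1
  obtain ⟨R, hR⟩ := exists_eventually_norm_le hA1 hPA hA2 hhom.apply_zero hJ hfid
  have hlim : Tendsto (fun k => toWeakDual (u k)) atTop (𝓝 (toWeakDual (PA f))) :=
    (WeakDual.isCompact_closedBall 0 R).tendsto_nhds_of_unique_mapClusterPt
      (hR.mono fun k hk => mem_closedBall_zero_iff.2 hk) fun w _ hw =>
        toStrongDual.injective (mapClusterPt_toWeakDual_eq hlsc hA3 hPA hJ hfid hw)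
  exact fun y => ((eval_continuous y).tendsto _).comp hlim

/-- Convergence to the projection, Theorem 2.11.
Let `(t_k) ⊂ (0,∞)` tend to infinity and let `u_{t_k}` be a minimizer of
`E_{t_k}^{α,β}(·;f)` for each `k`. Then `(u_{t_k})` converges in the weak* topology
(equivalently, pointwise on `Y`) to `u_∞ := P^A(f)`. -/
theorem convergence_to_projection
    {Y : Type*} [NormedAddCommGroup Y] [NormedSpace ℝ Y] [TopologicalSpace.SeparableSpace Y]
    {H : Type*} [NormedAddCommGroup H] [InnerProductSpace ℝ H]
    (A : (Y →L[ℝ] ℝ) →L[ℝ] H) (J : (Y →L[ℝ] ℝ) → ℝ≥0∞) (f : H) (PA : H → (Y →L[ℝ] ℝ))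
    (hproper : IsProperFn J) (hconv : EConvexFn J) (hlsc : WeakStarLSC J) (hhom : AbsOneHom J)
    (hdata : ∀ w, A w = f → J w ≠ 0)
    (hA1 : ANormEquiv A J) (hPA : IsAProj A J PA) (hA2 : PoincareIneq A J PA)
    (hA3 : WeakStarToWeakCont A)
    (α β : ℝ) (hα : 1 ≤ α) (hβ : 1 ≤ β)
    (t : ℕ → ℝ) (htpos : ∀ k, 0 < t k) (htinf : Tendsto t atTop atTop)
    (u : ℕ → (Y →L[ℝ] ℝ)) (hu : ∀ k, IsMinimizer A J f (t k) α β (u k)) :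
    ∀ y : Y, Tendsto (fun k => u k y) atTop (𝓝 (PA f y)) :=
  convergence_to_projection_general A J f PA hlsc hhom hA1 hPA hA2 hA3 α β hα hβ t htinf u hu

end
end

section
/- Let t > 0 and let û be a minimizer of E_t^{1,1}(·;f) with Aû ≠ f. Then every minimizer u of E_t^{1,1}(·;f) satisfies Au ∈ {f + c(Aû − f) : c ≥ 0}; that is, the set of forward solutions at time t is contained in the one-parameter family {f + c(Aû − f) : c ≥ 0}. -/
open Filter Topology Set
open scoped ENNReal RealInnerProductSpace

noncomputable section

/-!
Both terms of `E_t^{1,1}` are convex, and by strict convexity of the Hilbert norm the midpoint of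
two minimizers `u`, `û` has strictly smaller energy than their average unless `A u - f` and
`A û - f` lie on a common ray. Minimizers have finite energy because `J` is proper, so the
regularization terms can be cancelled and minimality forces the two residuals onto a common ray;
as `A û - f ≠ 0`, `A u - f` is a nonnegative multiple of it.
-/

section ForwardSolutions

variable {X : Type*} [NormedAddCommGroup X] [NormedSpace ℝ X]
  {H : Type*} [NormedAddCommGroup H] [InnerProductSpace ℝ H]
  {A : X →L[ℝ] H} {J : X → ℝ≥0∞} {f : H} {t : ℝ}

theorem En_one_one (v : X) :
    En A J f t 1 1 v = ENNReal.ofReal ‖A v - f‖ + ENNReal.ofReal t * J v := by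
  simp [En]

theorem EConvexFn.midpoint_add_self_le (hconv : EConvexFn J) (u v : X) :
    J ((1 / 2 : ℝ) • u + (1 / 2 : ℝ) • v) + J ((1 / 2 : ℝ) • u + (1 / 2 : ℝ) • v)
      ≤ J u + J v := by
  have hmid := hconv u v (1 / 2) (1 / 2) (by norm_num) (by norm_num) (by norm_num)
  have hhalf : ENNReal.ofReal (1 / 2) = 2⁻¹ := by
    rw [one_div, ENNReal.ofReal_inv_of_pos two_pos, ENNReal.ofReal_ofNat]
  rw [hhalf] at hmid
  calc _ ≤ (2⁻¹ * J u + 2⁻¹ * J v) + (2⁻¹ * J u + 2⁻¹ * J v) := add_le_add hmid hmid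
    _ = J u + J v := by
      rw [add_add_add_comm, ← add_mul, ← add_mul, ENNReal.inv_two_add_inv_two, one_mul, one_mul]

theorem En_one_one_midpoint_add_self_le (hconv : EConvexFn J) (u v : X) :
    En A J f t 1 1 ((1 / 2 : ℝ) • u + (1 / 2 : ℝ) • v)
        + En A J f t 1 1 ((1 / 2 : ℝ) • u + (1 / 2 : ℝ) • v)
      ≤ ENNReal.ofReal ‖(A u - f) + (A v - f)‖
        + (ENNReal.ofReal t * J u + ENNReal.ofReal t * J v) := by
  have hres : A ((1 / 2 : ℝ) • u + (1 / 2 : ℝ) • v) - f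
      = (1 / 2 : ℝ) • ((A u - f) + (A v - f)) := by
    rw [map_add, map_smul, map_smul]
    module
  rw [En_one_one, add_add_add_comm, ← mul_add, ← mul_add, hres, norm_smul,
    ← ENNReal.ofReal_add (by positivity) (by positivity)]
  refine add_le_add (le_of_eq ?_) (mul_le_mul_right (hconv.midpoint_add_self_le u v) _)
  rw [Real.norm_of_nonneg (by norm_num)]
  congr 1
  ring

theorem IsMinimizer.En_one_one_ne_top (hproper : IsProperFn J) {u : X}
    (hu : IsMinimizer A J f t 1 1 u) : En A J f t 1 1 u ≠ ⊤ := by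
  obtain ⟨u₀, hu₀⟩ := hproper
  refine ne_top_of_le_ne_top ?_ (hu u₀)
  rw [En_one_one]
  exact ENNReal.add_ne_top.mpr
    ⟨ENNReal.ofReal_ne_top, ENNReal.mul_ne_top ENNReal.ofReal_ne_top hu₀⟩

theorem IsMinimizer.sameRay_residual (hproper : IsProperFn J)
    (hconv : EConvexFn J) {u v : X} (hu : IsMinimizer A J f t 1 1 u)
    (hv : IsMinimizer A J f t 1 1 v) : SameRay ℝ (A u - f) (A v - f) := by
  have hreg_ne_top : ENNReal.ofReal t * J u + ENNReal.ofReal t * J v ≠ ⊤ := by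
    have := ENNReal.add_ne_top.mpr ⟨hu.En_one_one_ne_top hproper, hv.En_one_one_ne_top hproper⟩
    rw [En_one_one, En_one_one, add_add_add_comm] at this
    exact (ENNReal.add_ne_top.mp this).2
  have hsum : ENNReal.ofReal ‖A u - f‖ + ENNReal.ofReal ‖A v - f‖
        + (ENNReal.ofReal t * J u + ENNReal.ofReal t * J v)
      ≤ ENNReal.ofReal ‖(A u - f) + (A v - f)‖
        + (ENNReal.ofReal t * J u + ENNReal.ofReal t * J v) := by
    calc _ = En A J f t 1 1 u + En A J f t 1 1 v := by
          rw [En_one_one, En_one_one, add_add_add_comm]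
      _ ≤ _ := add_le_add (hu _) (hv _)
      _ ≤ _ := En_one_one_midpoint_add_self_le hconv u v
  have hnorm := ENNReal.le_of_add_le_add_right hreg_ne_top hsum
  rw [← ENNReal.ofReal_add (norm_nonneg _) (norm_nonneg _),
    ENNReal.ofReal_le_ofReal_iff (norm_nonneg _)] at hnorm
  exact sameRay_iff_norm_add.mpr (le_antisymm (norm_add_le _ _) hnorm)

end ForwardSolutions

theorem forward_solutions_one_parameter_family_general
    {Y : Type*} [NormedAddCommGroup Y] [NormedSpace ℝ Y]
    {H : Type*} [NormedAddCommGroup H] [InnerProductSpace ℝ H]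
    (A : (Y →L[ℝ] ℝ) →L[ℝ] H) (J : (Y →L[ℝ] ℝ) → ℝ≥0∞) (f : H)
    (hproper : IsProperFn J) (hconv : EConvexFn J)
    (t : ℝ)
    (uhat : Y →L[ℝ] ℝ) (huhat : IsMinimizer A J f t 1 1 uhat) (hne : A uhat ≠ f) :
    ∀ u, IsMinimizer A J f t 1 1 u → ∃ c : ℝ, 0 ≤ c ∧ A u = f + c • (A uhat - f) := by
  intro u hu
  obtain ⟨c, hc, hAu⟩ :=
    (huhat.sameRay_residual hproper hconv hu).exists_nonneg_left (sub_ne_zero.mpr hne)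
  exact ⟨c, hc, by rw [hAu, add_sub_cancel]⟩

/-- Uniqueness of the forward solution path II, Theorem 2.14.
Let `t > 0` and let `û` be a minimizer of `E_t^{1,1}(·;f)` with `Aû ≠ f`. Then every
minimizer `u` of `E_t^{1,1}(·;f)` satisfies `Au = f + c(Aû − f)` for some `c ≥ 0`. -/
theorem forward_solutions_one_parameter_family
    {Y : Type*} [NormedAddCommGroup Y] [NormedSpace ℝ Y]
    {H : Type*} [NormedAddCommGroup H] [InnerProductSpace ℝ H]
    (A : (Y →L[ℝ] ℝ) →L[ℝ] H) (J : (Y →L[ℝ] ℝ) → ℝ≥0∞) (f : H)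
    (hproper : IsProperFn J) (hconv : EConvexFn J) (hlsc : WeakStarLSC J) (hhom : AbsOneHom J)
    (hdata : ∀ w, A w = f → J w ≠ 0)
    (t : ℝ) (ht : 0 < t)
    (uhat : Y →L[ℝ] ℝ) (huhat : IsMinimizer A J f t 1 1 uhat) (hne : A uhat ≠ f) :
    ∀ u, IsMinimizer A J f t 1 1 u → ∃ c : ℝ, 0 ≤ c ∧ A u = f + c • (A uhat - f) :=
  forward_solutions_one_parameter_family_general A J f hproper hconv t uhat huhat hne

end
end
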